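/- arXiv:2107.12594 — 3 statements merged into one kernel-verified Lean document; each statement's English description precedes it below -/
import Mathlib

section
/- Let m ≥ 1 and let d be an integer with 2 ≤ d ≤ q^m. Set a = q - d^{1/m} (a real number), r = ⌊ m·log((q-a)/(q-⌊a⌋)) / log((q-⌊a⌋-1)/(q-⌊a⌋)) ⌋, and s = m⌊a⌋ + r. Then Hyp_q(d,m) ⊆ RM_q(s,m), and s is the smallest integer with this property; that is, Hyp_q(d,m) ⊄ RM_q(s-1,m). -/
open MvPolynomial Finset Pointwise

noncomputable section

/-- Evaluation of a multivariate polynomial at all points of `F^m`. -/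
def evalPt {F : Type} [Field F] {m : ℕ} (f : MvPolynomial (Fin m) F) : (Fin m → F) → F :=
  fun P => MvPolynomial.eval P f

/-- The monomial code `C_A = ev(F_q[A])`, the evaluations of the polynomials
whose monomial support is contained in `A`. -/
def monomialCode (F : Type) [Field F] (m : ℕ) (A : Set (Fin m →₀ ℕ)) :
    Set ((Fin m → F) → F) :=
  { v | ∃ f : MvPolynomial (Fin m) F, (↑f.support : Set (Fin m →₀ ℕ)) ⊆ A ∧ v = evalPt f }

/-- Exponent set of the Reed–Muller code `RM_q(s,m)` (empty when `s < 0`). -/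
def RMset (q m : ℕ) (s : ℤ) : Set (Fin m →₀ ℕ) :=
  { i | (∀ j, i j < q) ∧ (∑ j, (i j : ℤ)) ≤ s }

/-- Exponent set of the hyperbolic code `Hyp_q(d,m)`. -/
def Hypset (q m d : ℕ) : Set (Fin m →₀ ℕ) :=
  { i | (∀ j, i j < q) ∧ d ≤ ∏ j, (q - i j) }

/-- Exponent set of the cube code `Cube_q(s,m)`. -/
def Cubeset (m s : ℕ) : Set (Fin m →₀ ℕ) :=
  { i | ∀ j, i j ≤ s }

/-- Minimum distance of a code: least Hamming weight of a nonzero codeword. -/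
def minDist {F : Type} [Field F] [Fintype F] [DecidableEq F] {m : ℕ}
    (C : Set ((Fin m → F) → F)) : ℕ :=
  sInf { w | ∃ v ∈ C, v ≠ 0 ∧ hammingNorm v = w }

/-- Hamming distance from a word to a code. -/
def distToCode {F : Type} [Field F] [Fintype F] [DecidableEq F] {m : ℕ}
    (y : (Fin m → F) → F) (C : Set ((Fin m → F) → F)) : ℕ :=
  sInf { w | ∃ c ∈ C, hammingDist y c = w }

/-- `i`-fold Minkowski sum of `H` with itself (`0`-fold sum is `{0}`). -/
def iMink {m : ℕ} (H : Set (Fin m →₀ ℕ)) : ℕ → Set (Fin m →₀ ℕ)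
  | 0 => {0}
  | i + 1 => iMink H i + H

/-- The sets `L(d,r,i)` from the Geil–Matsumoto list-decoding algorithm. -/
def Lset (q m d r i : ℕ) : Set (Fin m →₀ ℕ) :=
  { a | (∀ j, a j < q) ∧ ∀ x ∈ iMink (Hypset q m d) i, a + x ∈ Hypset q m (r + 1) }

/-!
With `t = d^{1/m}`, `b = ⌈t⌉ - 1` and `k_j = q - i_j`, the exponent `i` lies in `Hyp_q(d,m)` iff
`∏ k_j ≥ d`, and lies in `RM_q(s,m)` iff `∑ k_j ≥ mq - s`. Since `log` is concave, on the integers it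
lies below its chord through `b` and `b + 1`; summing over `j`, a product `∏ k_j` exceeding
`(b+1)^(m-r-1) b^(r+1)` forces `∑ k_j ≥ m(b+1) - r`. The floor formula computes the largest `r` with
`(b+1)^(m-r) b^r ≥ d`, and the vector with `r` entries `b` and `m - r` entries `b + 1` attains the
bound. Reduced monomials evaluate to linearly independent words, so inclusions of these monomial
codes are inclusions of exponent sets.
-/

open Real

theorem ConcaveOn.le_secant_of_notMem_Ioo {𝕜 : Type*} [Field 𝕜] [LinearOrder 𝕜]
    [IsStrictOrderedRing 𝕜] {s : Set 𝕜} {f : 𝕜 → 𝕜} (hf : ConcaveOn 𝕜 s f) {u v x : 𝕜}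
    (hu : u ∈ s) (hv : v ∈ s) (hx : x ∈ s) (huv : u < v) (hxuv : x ∉ Set.Ioo u v) :
    f x ≤ f u + (x - u) * ((f v - f u) / (v - u)) := by
  have hvu : f v = f u + (v - u) * ((f v - f u) / (v - u)) := by
    field_simp [sub_ne_zero.2 huv.ne']
    ring
  rcases lt_trichotomy x u with hxu | rfl | hux
  · have h := hf.slope_anti_adjacent hx hv hxu huv
    rw [le_div_iff₀ (sub_pos.2 hxu)] at h
    linarith
  · simp
  · have hvx : v ≤ x := not_lt.1 fun hxv => hxuv ⟨hux, hxv⟩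
    rcases hvx.eq_or_lt with rfl | hvx
    · exact hvu.le
    · have h := hf.slope_anti_adjacent hu hx huv hvx
      rw [div_le_iff₀ (sub_pos.2 hvx)] at h
      nlinarith

theorem log_natCast_le_secant {b k : ℕ} (hb : 1 ≤ b) (hk : 1 ≤ k) :
    log k ≤ log b + (k - b) * (log (b + 1) - log b) := by
  have hpos : ∀ {n : ℕ}, 1 ≤ n → (n : ℝ) ∈ Set.Ioi 0 := fun hn => by
    simp only [Set.mem_Ioi, Nat.cast_pos]; omega
  have hnot : (k : ℝ) ∉ Set.Ioo (b : ℝ) (b + 1) := by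
    rintro ⟨h₁, h₂⟩
    norm_cast at h₁ h₂
    omega
  have := strictConcaveOn_log_Ioi.concaveOn.le_secant_of_notMem_Ioo (hpos hb)
    (by simpa using hpos (Nat.le_add_left 1 b)) (hpos hk) (by linarith) hnot
  simpa using this

theorem lt_sum_of_pow_mul_pow_lt_prod {ι : Type*} [Fintype ι] {b p n : ℕ} (hb : 1 ≤ b)
    (hcard : Fintype.card ι = p + n) {k : ι → ℕ} (hk : ∀ j, 1 ≤ k j)
    (hprod : (b + 1) ^ p * b ^ n < ∏ j, k j) : p * (b + 1) + n * b < ∑ j, k j := by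
  have hb0 : (0 : ℝ) < b := by exact_mod_cast hb
  set L := log (b + 1) - log b
  have hL : 0 < L := sub_pos.2 (log_lt_log hb0 (by linarith))
  have hlog : p * log (b + 1) + n * log b < ∑ j, log (k j) := by
    have h := log_lt_log (by positivity) (show (((b + 1) ^ p * b ^ n : ℕ) : ℝ) < ∏ j, (k j : ℝ)
      by exact_mod_cast hprod)
    rwa [Nat.cast_mul, Nat.cast_pow, Nat.cast_pow, log_mul (by positivity) (by positivity),
      log_pow, log_pow, log_prod fun j _ => by have := hk j; positivity, Nat.cast_add_one] at h
  have hsec : ∑ j, log (k j) ≤ (p + n) * log b + ((∑ j, (k j : ℝ)) - (p + n) * b) * L := by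
    calc ∑ j, log (k j) ≤ ∑ j, (log b + (k j - b) * L) :=
          sum_le_sum fun j _ => log_natCast_le_secant hb (hk j)
      _ = (p + n) * log b + ((∑ j, (k j : ℝ)) - (p + n) * b) * L := by
          simp only [sum_add_distrib, ← sum_mul, sum_sub_distrib, sum_const, card_univ, hcard,
            nsmul_eq_mul]
          push_cast
          ring
  have hlt : (p : ℝ) * L < ((∑ j, (k j : ℝ)) - (p + n) * b) * L := by
    simp only [L] at hlog hsec ⊢
    linarith
  have := lt_of_mul_lt_mul_right hlt hL.le
  exact_mod_cast (show ((p * (b + 1) + n * b : ℕ) : ℝ) < ∑ j, (k j : ℝ) by push_cast; linarith)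

theorem le_floor_log_div_log_iff {m : ℕ} {b t : ℝ} (hb : 0 < b) (ht : 0 < t) (z : ℤ) :
    z ≤ ⌊m * log (t / (b + 1)) / log (b / (b + 1))⌋ ↔
      m * log t ≤ (m - z) * log (b + 1) + z * log b := by
  have hD : log (b / (b + 1)) < 0 :=
    log_neg (by positivity) ((div_lt_one (by linarith)).2 (by linarith))
  rw [Int.le_floor, le_div_iff_of_neg hD, log_div ht.ne' (by linarith),
    log_div hb.ne' (by linarith)]
  constructor <;> intro h <;> linarith

theorem floor_log_div_log_spec {m b : ℕ} {t : ℝ} (hm : 0 < m) (hb : 1 ≤ b) (hbt : b < t)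
    (htb : t ≤ b + 1) :
    ∃ n : ℕ, ⌊m * log (t / (b + 1)) / log (b / (b + 1))⌋ = n ∧ n < m ∧
      t ^ m ≤ (b + 1) ^ (m - n) * b ^ n ∧ (b + 1) ^ (m - (n + 1)) * b ^ (n + 1) < t ^ m := by
  have hb0 : (0 : ℝ) < b := by exact_mod_cast hb
  have ht0 : 0 < t := hb0.trans hbt
  have key := le_floor_log_div_log_iff (m := m) hb0 ht0
  have hpow : ∀ n ≤ m, (m * log t ≤ (m - (n : ℤ)) * log (b + 1) + (n : ℤ) * log b ↔
      t ^ m ≤ (b + 1) ^ (m - n) * b ^ n) := fun n hn => by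
    rw [← log_le_log_iff (pow_pos ht0 m) (by positivity : (0 : ℝ) < (b + 1) ^ (m - n) * b ^ n),
      log_mul (by positivity) (by positivity), log_pow, log_pow, log_pow, Nat.cast_sub hn,
      Int.cast_natCast]
  set r := ⌊m * log (t / (b + 1)) / log (b / (b + 1))⌋
  have hr0 : 0 ≤ r :=
    (key 0).2 (by simpa using mul_le_mul_of_nonneg_left (log_le_log ht0 htb) m.cast_nonneg)
  have hrm : r < m := by
    by_contra! h
    have := (key m).1 h
    simp only [Int.cast_natCast, sub_self, zero_mul, zero_add] at this
    have := mul_lt_mul_of_pos_left (log_lt_log hb0 hbt) (Nat.cast_pos.2 hm)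
    linarith
  lift r to ℕ using hr0 with n hn
  have hnm : n < m := by exact_mod_cast hrm
  refine ⟨n, rfl, hnm, (hpow n hnm.le).1 ((key n).1 le_rfl), ?_⟩
  rw [← not_le, ← hpow (n + 1) hnm, ← key]
  push_cast
  omega

theorem eq_of_evalPt_eq {F : Type} [Field F] [Fintype F] {m : ℕ}
    {f g : MvPolynomial (Fin m) F} (hf : ∀ i ∈ f.support, ∀ j, i j < Fintype.card F)
    (hg : ∀ i ∈ g.support, ∀ j, i j < Fintype.card F) (h : evalPt f = evalPt g) : f = g := by
  refine sub_eq_zero.1 (eq_zero_of_eval_eq_zero (Fin m) F _ (fun P => ?_) ?_)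
  · rw [map_sub, sub_eq_zero]
    exact congrFun h P
  · rw [mem_restrictDegree]
    intro i hi j
    rcases Finset.mem_union.1 (support_sub (Fin m) f g hi) with hi | hi
    · have := hf i hi j; omega
    · have := hg i hi j; omega

theorem monomialCode_subset_monomialCode_iff {F : Type} [Field F] [Fintype F] {m : ℕ}
    {A B : Set (Fin m →₀ ℕ)} (hA : ∀ i ∈ A, ∀ j, i j < Fintype.card F)
    (hB : ∀ i ∈ B, ∀ j, i j < Fintype.card F) :
    monomialCode F m A ⊆ monomialCode F m B ↔ A ⊆ B := by
  classical
  constructor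
  · intro h i hi
    have hsupp : (monomial i (1 : F)).support = {i} :=
      support_monomial.trans (if_neg one_ne_zero)
    obtain ⟨f, hfB, hf⟩ := h ⟨monomial i 1, by simpa [hsupp] using hi, rfl⟩
    have hfi : f = monomial i 1 :=
      eq_of_evalPt_eq (fun k hk => hB k (hfB hk)) (by simpa [hsupp] using hA i hi) hf.symm
    exact hfB (by simp [hfi, hsupp])
  · rintro h v ⟨f, hfA, rfl⟩
    exact ⟨f, hfA.trans h, rfl⟩

theorem hypset_subset_rmset {q m d b n : ℕ} (hb : 1 ≤ b) (hnm : n < m)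
    (hd : (b + 1) ^ (m - (n + 1)) * b ^ (n + 1) < d) :
    Hypset q m d ⊆ RMset q m (m * ((q : ℤ) - (b + 1)) + n) := by
  rintro i ⟨hiq, hid⟩
  refine ⟨hiq, ?_⟩
  have hsum := lt_sum_of_pow_mul_pow_lt_prod hb (by rw [Fintype.card_fin]; omega)
    (k := fun j => q - i j) (fun j => by have := hiq j; omega) (hd.trans_le hid)
  have hsplit : ∑ j, (i j : ℤ) + ∑ j, ((q - i j : ℕ) : ℤ) = m * q := by
    rw [← sum_add_distrib, sum_congr rfl fun j _ =>
      (show (i j : ℤ) + ((q - i j : ℕ) : ℤ) = q by have := hiq j; omega), sum_const,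
      card_univ, Fintype.card_fin, nsmul_eq_mul]
  have hsumZ : (((m - (n + 1)) * (b + 1) + (n + 1) * b : ℕ) : ℤ) <
      ∑ j, ((q - i j : ℕ) : ℤ) := by
    exact_mod_cast hsum
  push_cast [Nat.cast_sub hnm] at hsumZ
  linarith

theorem exists_mem_hypset_sum_eq {q m d b n : ℕ} (hb : 1 ≤ b) (hbq : b < q) (hnm : n ≤ m)
    (hd : d ≤ (b + 1) ^ (m - n) * b ^ n) :
    ∃ i ∈ Hypset q m d, ∑ j, (i j : ℤ) = m * ((q : ℤ) - (b + 1)) + n := by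
  obtain ⟨e, rfl⟩ := Nat.exists_eq_add_of_le hnm
  refine ⟨Finsupp.equivFunOnFinite.symm
    (Fin.append (fun _ : Fin n => q - b) fun _ : Fin e => q - (b + 1)), ⟨fun j => ?_, ?_⟩, ?_⟩
  · refine Fin.addCases (fun _ => ?_) (fun _ => ?_) j <;>
      simp only [Finsupp.coe_equivFunOnFinite_symm, Fin.append_left, Fin.append_right] <;> omega
  · simp only [Finsupp.coe_equivFunOnFinite_symm, Fin.prod_univ_add, Fin.append_left,
      Fin.append_right, prod_const, card_univ, Fintype.card_fin]
    rw [show q - (q - b) = b by omega, show q - (q - (b + 1)) = b + 1 by omega, mul_comm]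
    simpa using hd
  · simp only [Finsupp.coe_equivFunOnFinite_symm, Fin.sum_univ_add, Fin.append_left,
      Fin.append_right, sum_const, card_univ, Fintype.card_fin, nsmul_eq_mul]
    push_cast [Nat.cast_sub hbq.le, Nat.cast_sub (show b + 1 ≤ q by omega)]
    ring

theorem statement6_general (F : Type) [Field F] [Fintype F]
    (q m d : ℕ) (hq : Fintype.card F = q) (hm : 1 ≤ m) (hd1 : 2 ≤ d) (hd2 : d ≤ q ^ m)
    (a : ℝ) (ha : a = (q : ℝ) - (d : ℝ) ^ ((1 : ℝ) / m))
    (r : ℤ) (hr : r = ⌊(m : ℝ) * Real.log (((q : ℝ) - a) / ((q : ℝ) - (⌊a⌋ : ℝ))) /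
        Real.log (((q : ℝ) - (⌊a⌋ : ℝ) - 1) / ((q : ℝ) - (⌊a⌋ : ℝ)))⌋)
    (s : ℤ) (hs : s = (m : ℤ) * ⌊a⌋ + r) :
    monomialCode F m (Hypset q m d) ⊆ monomialCode F m (RMset q m s) ∧
      ¬ monomialCode F m (Hypset q m d) ⊆ monomialCode F m (RMset q m (s - 1)) := by
  set t : ℝ := (d : ℝ) ^ ((1 : ℝ) / m) with ht
  have ht_pow : t ^ m = d := by
    rw [ht, one_div]; exact rpow_inv_natCast_pow d.cast_nonneg (by omega)
  have h1t : 1 < t := one_lt_rpow (by exact_mod_cast hd1) (by positivity)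
  have htq : t ≤ q := by
    have : t ^ m ≤ (q : ℝ) ^ m := by rw [ht_pow]; exact_mod_cast hd2
    exact (pow_le_pow_iff_left₀ (by positivity) q.cast_nonneg (by omega)).1 this
  have h1ceil : 1 < ⌈t⌉ := Int.lt_ceil.2 (by exact_mod_cast h1t)
  obtain ⟨b, hb⟩ : ∃ b : ℕ, ⌈t⌉ = b + 1 := ⟨(⌈t⌉ - 1).toNat, by omega⟩
  have hbt : (b : ℝ) < t := by
    have := Int.ceil_lt_add_one t
    rw [hb] at this
    push_cast at this
    linarith
  have htb : t ≤ b + 1 := by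
    have := Int.le_ceil t
    rw [hb] at this
    exact_mod_cast this
  have hb1 : 1 ≤ b := by omega
  have hbq : b < q := by exact_mod_cast hbt.trans_le htq
  have hfloor : ⌊a⌋ = q - (b + 1) := by
    rw [ha, sub_eq_add_neg, Int.floor_natCast_add, Int.floor_neg, hb]; ring
  obtain ⟨n, hrn, hnm, hup, hlow⟩ := floor_log_div_log_spec (m := m) (by omega) hb1 hbt htb
  have hqa : (q : ℝ) - a = t := by rw [ha]; ring
  have hr' : r = n := by
    rw [hr, ← hrn, hqa, hfloor]
    push_cast
    ring_nf
  have hs' : s = m * ((q : ℤ) - (b + 1)) + n := by rw [hs, hfloor, hr']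
  rw [ht_pow] at hup hlow
  have hHyp : ∀ i ∈ Hypset q m d, ∀ j, i j < Fintype.card F := fun i hi => hq ▸ hi.1
  have hRM : ∀ s', ∀ i ∈ RMset q m s', ∀ j, i j < Fintype.card F := fun _ i hi => hq ▸ hi.1
  rw [monomialCode_subset_monomialCode_iff hHyp (hRM _),
    monomialCode_subset_monomialCode_iff hHyp (hRM _), hs']
  obtain ⟨i, hi, hsum⟩ := exists_mem_hypset_sum_eq hb1 hbq hnm.le (by exact_mod_cast hup)
  exact ⟨hypset_subset_rmset hb1 hnm (by exact_mod_cast hlow),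
    fun h => by have := (h hi).2; omega⟩

/-- with `a = q - d^{1/m}`,
`r = ⌊ m·log((q-a)/(q-⌊a⌋)) / log((q-⌊a⌋-1)/(q-⌊a⌋)) ⌋` and `s = m⌊a⌋ + r`,
`Hyp_q(d,m) ⊆ RM_q(s,m)` and `s` is the smallest integer with this property. -/
theorem statement6 (F : Type) [Field F] [Fintype F] [DecidableEq F]
    (q m d : ℕ) (hq : Fintype.card F = q) (hm : 1 ≤ m) (hd1 : 2 ≤ d) (hd2 : d ≤ q ^ m)
    (a : ℝ) (ha : a = (q : ℝ) - (d : ℝ) ^ ((1 : ℝ) / m))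
    (r : ℤ) (hr : r = ⌊(m : ℝ) * Real.log (((q : ℝ) - a) / ((q : ℝ) - (⌊a⌋ : ℝ))) /
        Real.log (((q : ℝ) - (⌊a⌋ : ℝ) - 1) / ((q : ℝ) - (⌊a⌋ : ℝ)))⌋)
    (s : ℤ) (hs : s = (m : ℤ) * ⌊a⌋ + r) :
    monomialCode F m (Hypset q m d) ⊆ monomialCode F m (RMset q m s) ∧
      ¬ monomialCode F m (Hypset q m d) ⊆ monomialCode F m (RMset q m (s - 1)) :=
  statement6_general F q m d hq hm hd1 hd2 a ha r hr s hs
end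
end

section
/- Let m ≥ 1, let d be an integer with 1 ≤ d ≤ q^m, and let s be an integer with 0 ≤ s ≤ m(q-1). Then the minimum distance of RM_q(s,m) satisfies δ(RM_q(s,m)) ≥ d if and only if s ≤ (m-c)(q-1) + q - ⌈d/q^{c-1}⌉, where c = ⌈log_q(d)⌉. -/
open MvPolynomial Finset Pointwise

noncomputable section

/-!
The minimum distance of `RM_q(s, m)` is `rmDist q m s`, obtained by induction on `m`. Expand a
nonzero reduced `f` in `X₀`, of degree `t < q` with leading coefficient `g`: at each of the at
least `rmDist q m (s - t)` points `x` with `g(x) ≠ 0`, the polynomial `f(·, x)` has degree `t`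
and so does not vanish at `q - t` or more values of `X₀`; minimising `(q - t) * rmDist q m (s - t)`
over `t` gives back `rmDist q (m + 1) s`. The minimum is attained by `∏_{c ∈ T} (X₀ - c) · f'`
with `#T = min s (q - 1)`.

For `d ≥ 2` we have `c = clog_q d`, so `q ^ (c - 1) < d ≤ q ^ c`, and `d ≤ (q - b) * q ^ (c - 1)`
holds exactly when `⌈d / q ^ (c - 1)⌉ ≤ q - b`; this turns `d ≤ rmDist q m s` into the stated
linear condition on `s`.
-/

-- For `s = a * (q - 1) + b` with `b < q - 1` and `a < m` this is `(q - b) * q ^ (m - a - 1)`;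
-- it is `1` once `s ≥ m * (q - 1)`.
def rmDist (q : ℕ) : ℕ → ℕ → ℕ
  | 0, _ => 1
  | m + 1, s => if s < q then (q - s) * q ^ m else rmDist q m (s - (q - 1))

section RmDist

variable {q : ℕ}

theorem one_le_rmDist (hq : 0 < q) : ∀ m s, 1 ≤ rmDist q m s
  | 0, _ => le_rfl
  | m + 1, s => by
    rw [rmDist]
    split_ifs with hs
    · exact Nat.one_le_iff_ne_zero.mpr (mul_ne_zero (by omega) (pow_pos hq m).ne')
    · exact one_le_rmDist hq m _

theorem rmDist_zero_right (hq : 0 < q) (m : ℕ) : rmDist q m 0 = q ^ m := by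
  cases m <;> simp [rmDist, hq, pow_succ']

theorem rmDist_succ_of_lt {s : ℕ} (hs : s < q) (m : ℕ) :
    rmDist q (m + 1) s = (q - s) * q ^ m := if_pos hs

theorem rmDist_le_mul_rmDist_add {k : ℕ} (hk : k < q) :
    ∀ m s, rmDist q m s ≤ (k + 1) * rmDist q m (s + k)
  | 0, _ => by simp [rmDist]
  | m + 1, s => by
    by_cases hsk : s + k < q
    · rw [rmDist_succ_of_lt (by omega), rmDist_succ_of_lt hsk, ← mul_assoc]
      gcongr
      -- the difference is `k * (q - s - k - 1)`
      zify [hsk.le, (show s ≤ q by omega)]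
      nlinarith
    by_cases hs : s < q
    · rw [rmDist_succ_of_lt hs, rmDist, if_neg hsk]
      cases m with
      | zero => simp only [rmDist, pow_zero, mul_one]; omega
      | succ m =>
        rw [rmDist_succ_of_lt (by omega)]
        -- with `a = q - s ≤ b = k + 1 ≤ q` the difference is `(b - a) * (q - b)`
        have key : (q - s) * q ≤ (k + 1) * (q - (s + k - (q - 1))) := by
          zify [hs.le, (show q - 1 ≤ s + k by omega), (show 1 ≤ q by omega),
            (show s + k - (q - 1) ≤ q by omega)]
          nlinarith
        calc (q - s) * q ^ (m + 1) = (q - s) * q * q ^ m := by ring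
          _ ≤ (k + 1) * (q - (s + k - (q - 1))) * q ^ m := by gcongr
          _ = _ := by ring
    · rw [rmDist, rmDist, if_neg hs, if_neg hsk, show s + k - (q - 1) = s - (q - 1) + k by omega]
      exact rmDist_le_mul_rmDist_add hk m _

theorem rmDist_succ_le_mul {t s : ℕ} (ht : t < q) (hts : t ≤ s) (m : ℕ) :
    rmDist q (m + 1) s ≤ (q - t) * rmDist q m (s - t) := by
  by_cases hs : s < q
  · rw [rmDist_succ_of_lt hs]
    cases m with
    | zero => simp only [rmDist, pow_zero, mul_one]; omega
    | succ m =>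
      rw [rmDist_succ_of_lt (by omega)]
      -- the difference is `t * (s - t)`
      have key : (q - s) * q ≤ (q - t) * (q - (s - t)) := by
        zify [hs.le, ht.le, hts, (show s - t ≤ q by omega)]
        nlinarith
      calc (q - s) * q ^ (m + 1) = (q - s) * q * q ^ m := by ring
        _ ≤ (q - t) * (q - (s - t)) * q ^ m := by gcongr
        _ = _ := by ring
  · have h := rmDist_le_mul_rmDist_add (q := q) (k := q - 1 - t) (by omega) m (s - (q - 1))
    rw [rmDist, if_neg hs]
    rwa [show s - (q - 1) + (q - 1 - t) = s - t by omega,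
      show q - 1 - t + 1 = q - t by omega] at h

theorem rmDist_succ_eq (hq : 0 < q) (m s : ℕ) :
    rmDist q (m + 1) s = (q - min s (q - 1)) * rmDist q m (s - min s (q - 1)) := by
  by_cases hs : s < q
  · rw [rmDist_succ_of_lt hs, min_eq_left (by omega), Nat.sub_self, rmDist_zero_right hq]
  · rw [rmDist, if_neg hs, min_eq_right (by omega), show q - (q - 1) = 1 by omega, one_mul]

end RmDist

section Threshold

variable {q d n e : ℕ}

theorem one_lt_of_forall_le_mul_pow_iff (hlo : q ^ n < d) (he : ∀ k, d ≤ k * q ^ n ↔ e ≤ k) :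
    1 < e := by
  by_contra! h
  exact hlo.not_ge (by simpa using (he 1).mpr h)

theorem le_sub_mul_pow_iff (hq : 1 < q) (hlo : q ^ n < d) (hhi : d ≤ q ^ (n + 1))
    (he : ∀ k, d ≤ k * q ^ n ↔ e ≤ k) {m s : ℕ} (hs : s < q) :
    d ≤ (q - s) * q ^ m ↔ n * (q - 1) + e + s ≤ (m + 1) * (q - 1) + 1 := by
  have he1 := one_lt_of_forall_le_mul_pow_iff hlo he
  have heq : e ≤ q := (he q).mp (by rwa [← pow_succ'])
  rcases lt_trichotomy n m with hnm | rfl | hmn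
  · have hL : d ≤ (q - s) * q ^ m := calc
      d ≤ q ^ (n + 1) := hhi
      _ ≤ 1 * q ^ m := by rw [one_mul]; exact Nat.pow_le_pow_right hq.le hnm
      _ ≤ (q - s) * q ^ m := by gcongr; omega
    have hR : (n + 1) * (q - 1) ≤ m * (q - 1) := by gcongr; omega
    refine iff_of_true hL ?_
    rw [add_mul, one_mul] at hR ⊢
    omega
  · rw [he, add_mul, one_mul]
    omega
  · have hL : (q - s) * q ^ m < d := calc
      (q - s) * q ^ m ≤ q * q ^ m := by gcongr; omega
      _ = q ^ (m + 1) := (pow_succ' q m).symm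
      _ ≤ q ^ n := Nat.pow_le_pow_right hq.le hmn
      _ < d := hlo
    have hR : (m + 1) * (q - 1) ≤ n * (q - 1) := by gcongr; omega
    exact iff_of_false hL.not_ge (by omega)

theorem le_rmDist_iff (hq : 1 < q) (hlo : q ^ n < d) (hhi : d ≤ q ^ (n + 1))
    (he : ∀ k, d ≤ k * q ^ n ↔ e ≤ k) :
    ∀ m s, d ≤ rmDist q m s ↔ n * (q - 1) + e + s ≤ m * (q - 1) + 1
  | 0, s => by
    have he1 := one_lt_of_forall_le_mul_pow_iff hlo he
    have hd : 1 < d := lt_of_le_of_lt (Nat.one_le_pow _ _ (by omega)) hlo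
    exact iff_of_false (by rw [rmDist]; omega) (by omega)
  | m + 1, s => by
    by_cases hs : s < q
    · rw [rmDist_succ_of_lt hs, le_sub_mul_pow_iff hq hlo hhi he hs]
    · rw [rmDist, if_neg hs, le_rmDist_iff hq hlo hhi he m, add_mul, one_mul]
      omega

end Threshold

theorem card_filter_fin_succ {α : Type*} [Fintype α] {m : ℕ} (p : (Fin (m + 1) → α) → Prop)
    [DecidablePred p] :
    #{P | p P} = ∑ x : Fin m → α, #{x₀ | p (Fin.cons x₀ x)} := by
  simp only [Finset.card_filter]
  rw [← (Fin.consEquiv fun _ => α).sum_comp, Fintype.sum_prod_type_right]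
  rfl

theorem card_filter_mul_ne_zero {α R : Type*} [Fintype α] [MulZeroClass R] [NoZeroDivisors R]
    [DecidableEq R] {m : ℕ} (a : α → R) (b : (Fin m → α) → R) :
    #{P : Fin (m + 1) → α | a (P 0) * b (Fin.tail P) ≠ 0} = #{x₀ | a x₀ ≠ 0} * #{x | b x ≠ 0} := by
  rw [card_filter_fin_succ, Finset.card_filter, Finset.card_filter, Finset.sum_mul_sum]
  simp only [Fin.cons_zero, Fin.tail_cons, mul_ne_zero_iff, Finset.card_filter,
    ite_zero_mul_ite_zero, mul_one]
  rw [Finset.sum_comm]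

theorem card_sub_natDegree_le_card_eval_ne_zero {R : Type*} [CommRing R] [IsDomain R] [Fintype R]
    [DecidableEq R] {p : Polynomial R} (hp : p ≠ 0) :
    Fintype.card R - p.natDegree ≤ #{x | p.eval x ≠ 0} := by
  have hroots : #{x | p.eval x = 0} ≤ p.natDegree :=
    Polynomial.card_le_degree_of_subset_roots fun x hx => by
      simp_all [Polynomial.mem_roots hp]
  have := Finset.card_filter_add_card_filter_not (s := univ) (fun x => p.eval x = 0)
  rw [Finset.card_univ] at this
  simp only [ne_eq]
  omega

theorem coe_support_subset_RMset_iff {R : Type*} [CommSemiring R] {q m s : ℕ} (hq : 0 < q)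
    (f : MvPolynomial (Fin m) R) :
    ↑f.support ⊆ RMset q m s ↔ (∀ j, degreeOf j f < q) ∧ f.totalDegree ≤ s := by
  have hsum (i : Fin m →₀ ℕ) : (i.sum fun _ e => e) = ∑ j, i j :=
    Finsupp.sum_fintype _ _ fun _ => rfl
  simp only [degreeOf_lt_iff hq, totalDegree, Finset.sup_le_iff, hsum, Set.subset_def,
    Finset.mem_coe, RMset, Set.mem_ofPred_eq]
  norm_cast
  aesop

theorem degreeOf_prod_X_sub_C_le {σ R : Type*} [CommRing R] [Nontrivial R] [DecidableEq σ]
    (T : Finset R) (i j : σ) :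
    degreeOf j (∏ c ∈ T, (X i - C c) : MvPolynomial σ R) ≤ if j = i then #T else 0 := by
  refine (degreeOf_prod_le j T _).trans ?_
  calc ∑ c ∈ T, degreeOf j (X i - C c : MvPolynomial σ R)
      ≤ ∑ _c ∈ T, if j = i then 1 else 0 := sum_le_sum fun c _ => by
        simpa [degreeOf_X, degreeOf_C] using degreeOf_sub_le j (X i : MvPolynomial σ R) (C c)
    _ = if j = i then #T else 0 := by split_ifs <;> simp

section ExtendVanishing

def extendVanishing {R : Type*} [CommRing R] {m : ℕ} (T : Finset R)
    (f : MvPolynomial (Fin m) R) : MvPolynomial (Fin (m + 1)) R :=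
  (∏ c ∈ T, (X 0 - C c)) * rename Fin.succ f

variable {R : Type*} [CommRing R] {m : ℕ} (T : Finset R) (f : MvPolynomial (Fin m) R)

theorem eval_extendVanishing (P : Fin (m + 1) → R) :
    eval P (extendVanishing T f) = (∏ c ∈ T, (P 0 - c)) * eval (Fin.tail P) f := by
  simp [extendVanishing, eval_rename, Fin.tail_def, Function.comp_def]

theorem degreeOf_extendVanishing_lt [Nontrivial R] {q : ℕ} (hT : #T < q)
    (hf : ∀ j, degreeOf j f < q) (j : Fin (m + 1)) :
    degreeOf j (extendVanishing T f) < q := by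
  refine (degreeOf_mul_le _ _ _).trans_lt ?_
  have hprod := degreeOf_prod_X_sub_C_le T 0 j
  cases j using Fin.cases with
  | zero =>
    have hrename : degreeOf 0 (rename Fin.succ f) = 0 := by
      by_contra h
      obtain ⟨k, -, hk⟩ := mem_image.mp (vars_rename _ f (mem_vars_iff_degreeOf_ne_zero.mpr h))
      exact Fin.succ_ne_zero k hk
    simp only [if_true] at hprod
    omega
  | succ k =>
    rw [degreeOf_rename_of_injective (Fin.succ_injective m)]
    simp only [Fin.succ_ne_zero, if_false, Nat.le_zero] at hprod
    rw [hprod, zero_add]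
    exact hf k

theorem totalDegree_extendVanishing_le [Nontrivial R] :
    (extendVanishing T f).totalDegree ≤ #T + f.totalDegree := by
  refine (totalDegree_mul _ _).trans (add_le_add ?_ (totalDegree_rename_le _ _))
  refine (totalDegree_finsetProd _ _).trans ?_
  calc ∑ c ∈ T, (X 0 - C c : MvPolynomial (Fin (m + 1)) R).totalDegree ≤ ∑ _c ∈ T, 1 :=
        sum_le_sum fun c _ => (totalDegree_sub_C_le _ _).trans (totalDegree_X _).le
    _ = #T := by simp

end ExtendVanishing

section ReedMuller

variable {F : Type} [Field F] [Fintype F] [DecidableEq F]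

theorem hammingNorm_evalPt {m : ℕ} (f : MvPolynomial (Fin m) F) :
    hammingNorm (evalPt f) = #{P | eval P f ≠ 0} := rfl

theorem card_sub_degreeOf_le_card_fiber {m : ℕ} (f : MvPolynomial (Fin (m + 1)) F)
    {x : Fin m → F} (hx : eval x (finSuccEquiv F m f).leadingCoeff ≠ 0) :
    Fintype.card F - degreeOf 0 f ≤ #{x₀ | eval (Fin.cons x₀ x) f ≠ 0} := by
  set p := (finSuccEquiv F m f).map (eval x)
  have hp : p ≠ 0 := fun h => hx (by
    simpa [p, Polynomial.coeff_map] using congr_arg (·.coeff (finSuccEquiv F m f).natDegree) h)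
  have hdeg : p.natDegree ≤ degreeOf 0 f :=
    (natDegree_finSuccEquiv f).symm ▸ Polynomial.natDegree_map_le
  simp only [eval_eq_eval_mv_eval']
  exact (Nat.sub_le_sub_left hdeg _).trans (card_sub_natDegree_le_card_eval_ne_zero hp)

theorem rmDist_le_hammingNorm_evalPt {m s : ℕ} {f : MvPolynomial (Fin m) F} (hf : f ≠ 0)
    (hdeg : ∀ j, degreeOf j f < Fintype.card F) (htot : f.totalDegree ≤ s) :
    rmDist (Fintype.card F) m s ≤ hammingNorm (evalPt f) := by
  induction m generalizing s with
  | zero =>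
    refine hammingNorm_pos_iff.mpr fun h => hf ?_
    have h0 := congr_fun h default
    rw [evalPt, f.eq_C_of_isEmpty, eval_C] at h0
    rw [f.eq_C_of_isEmpty, h0, Pi.zero_apply, C_0]
  | succ m ih =>
    set q := Fintype.card F
    set g := (finSuccEquiv F m f).leadingCoeff
    have hg : g ≠ 0 := Polynomial.leadingCoeff_ne_zero.mpr (EmbeddingLike.map_ne_zero_iff.mpr hf)
    have hgtot : g.totalDegree + degreeOf 0 f ≤ f.totalDegree := by
      rw [← natDegree_finSuccEquiv]; exact totalDegree_coeff_finSuccEquiv_add_le f _ hg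
    have hgdeg : ∀ j, degreeOf j g < q :=
      fun j => (degreeOf_coeff_finSuccEquiv f j _).trans_lt (hdeg j.succ)
    calc rmDist q (m + 1) s ≤ (q - degreeOf 0 f) * rmDist q m (s - degreeOf 0 f) :=
          rmDist_succ_le_mul (hdeg 0) (by omega) m
      _ ≤ (q - degreeOf 0 f) * #{x | eval x g ≠ 0} :=
          Nat.mul_le_mul_left _ (ih hg hgdeg (by omega))
      _ = ∑ x ∈ {x | eval x g ≠ 0}, (q - degreeOf 0 f) := by rw [sum_const, smul_eq_mul, mul_comm]
      _ ≤ ∑ x ∈ {x | eval x g ≠ 0}, #{x₀ | eval (Fin.cons x₀ x) f ≠ 0} :=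
          sum_le_sum fun x hx => card_sub_degreeOf_le_card_fiber f (mem_filter.mp hx).2
      _ ≤ ∑ x, #{x₀ | eval (Fin.cons x₀ x) f ≠ 0} := sum_le_sum_of_subset (filter_subset _ _)
      _ = hammingNorm (evalPt f) := (card_filter_fin_succ fun P => eval P f ≠ 0).symm

theorem hammingNorm_evalPt_extendVanishing {m : ℕ} (T : Finset F)
    (f : MvPolynomial (Fin m) F) :
    hammingNorm (evalPt (extendVanishing T f)) =
      (Fintype.card F - #T) * hammingNorm (evalPt f) := by
  rw [hammingNorm_evalPt, hammingNorm_evalPt]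
  simp only [eval_extendVanishing]
  rw [card_filter_mul_ne_zero (fun x₀ => ∏ c ∈ T, (x₀ - c)) (fun x => eval x f)]
  congr
  rw [← card_compl]
  congr 1
  ext x
  simp [prod_ne_zero_iff, sub_eq_zero]

theorem exists_hammingNorm_evalPt_eq_rmDist (m s : ℕ) :
    ∃ f : MvPolynomial (Fin m) F, (∀ j, degreeOf j f < Fintype.card F) ∧ f.totalDegree ≤ s ∧
      hammingNorm (evalPt f) = rmDist (Fintype.card F) m s := by
  have hq : 0 < Fintype.card F := Fintype.card_pos
  induction m generalizing s with
  | zero => exact ⟨1, fun j => j.elim0, by simp, by simp [hammingNorm_evalPt, rmDist]⟩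
  | succ m ih =>
    set t := min s (Fintype.card F - 1)
    obtain ⟨f, hdeg, htot, hf⟩ := ih (s - t)
    obtain ⟨T, -, hT⟩ := exists_subset_card_eq (s := (univ : Finset F)) (n := t)
      (by rw [card_univ]; omega)
    refine ⟨extendVanishing T f, degreeOf_extendVanishing_lt T f (by omega) hdeg,
      (totalDegree_extendVanishing_le T f).trans (by omega), ?_⟩
    rw [hammingNorm_evalPt_extendVanishing, hf, hT, rmDist_succ_eq hq]

theorem minDist_monomialCode_RMset (m s : ℕ) :
    minDist (monomialCode F m (RMset (Fintype.card F) m s)) = rmDist (Fintype.card F) m s := by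
  have hq : 0 < Fintype.card F := Fintype.card_pos
  refine IsLeast.csInf_eq ⟨?_, ?_⟩
  · obtain ⟨f, hdeg, htot, hf⟩ := exists_hammingNorm_evalPt_eq_rmDist (F := F) m s
    refine ⟨evalPt f, ⟨f, (coe_support_subset_RMset_iff hq f).mpr ⟨hdeg, htot⟩, rfl⟩,
      fun h => ?_, hf⟩
    have := one_le_rmDist hq m s
    rw [← hf, h, hammingNorm_zero] at this
    omega
  · rintro w ⟨v, ⟨f, hsupp, rfl⟩, hv, rfl⟩
    obtain ⟨hdeg, htot⟩ := (coe_support_subset_RMset_iff hq f).mp hsupp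
    refine rmDist_le_hammingNorm_evalPt (fun hf => hv ?_) hdeg htot
    subst hf
    funext P
    simp [evalPt]

end ReedMuller

theorem statement7_general (F : Type) [Field F] [Fintype F] [DecidableEq F]
    (q m d s : ℕ) (hq : Fintype.card F = q)
    (hs : s ≤ m * (q - 1)) (c : ℤ) (hc : c = ⌈Real.logb q d⌉) :
    d ≤ minDist (monomialCode F m (RMset q m (s : ℤ))) ↔
      (s : ℤ) ≤ ((m : ℤ) - c) * ((q : ℤ) - 1) + (q : ℤ) - ⌈(d : ℝ) / (q : ℝ) ^ (c - 1)⌉ := by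
  subst hq hc
  set q := Fintype.card F
  have hq : 1 < q := Fintype.one_lt_card
  rw [minDist_monomialCode_RMset, Real.ceil_logb_natCast d.cast_nonneg, Int.clog_natCast]
  obtain hd | hd := le_or_gt d 1
  · -- `c = 0`, so the right-hand side reads `s ≤ m * (q - 1) + (1 - d) * q`
    rw [Nat.clog_of_right_le_one hd]
    refine iff_of_true (hd.trans (one_le_rmDist (by omega) m s)) ?_
    have hceil : ⌈(d : ℝ) / (q : ℝ) ^ (((0 : ℕ) : ℤ) - 1)⌉ = d * q := by
      rw [Nat.cast_zero, zero_sub, zpow_neg_one, div_inv_eq_mul]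
      exact_mod_cast Int.ceil_natCast (d * q)
    have hdq : d * q ≤ 1 * q := Nat.mul_le_mul_right q hd
    rw [hceil, Nat.cast_zero, sub_zero]
    zify [hq.le] at hs hdq
    linarith
  · obtain ⟨n, hn⟩ := Nat.exists_eq_add_one_of_ne_zero (Nat.clog_pos hq hd).ne'
    have hlo : q ^ n < d := (Nat.lt_clog_iff_pow_lt hq).mp (by omega)
    have hhi : d ≤ q ^ (n + 1) := (Nat.clog_le_iff_le_pow hq).mp hn.le
    have hceil : ⌈(d : ℝ) / (q : ℝ) ^ (((n + 1 : ℕ) : ℤ) - 1)⌉ = ⌈(d : ℝ) / (q ^ n : ℕ)⌉₊ := by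
      rw [Nat.cast_add_one, add_sub_cancel_right, zpow_natCast, Nat.cast_pow,
        ← Int.natCast_ceil_eq_ceil (by positivity)]
    have he (k : ℕ) : d ≤ k * q ^ n ↔ ⌈(d : ℝ) / (q ^ n : ℕ)⌉₊ ≤ k := by
      rw [Nat.ceil_le, div_le_iff₀ (by positivity)]
      norm_cast
    rw [hn, hceil, le_rmDist_iff hq hlo hhi he, ← Nat.cast_le (α := ℤ)]
    push_cast [Nat.cast_sub hq.le]
    constructor <;> intro h <;> linarith

/-- `δ(RM_q(s,m)) ≥ d` iff `s ≤ (m-c)(q-1) + q - ⌈d/q^{c-1}⌉`,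
where `c = ⌈log_q d⌉`. -/
theorem statement7 (F : Type) [Field F] [Fintype F] [DecidableEq F]
    (q m d s : ℕ) (hq : Fintype.card F = q) (hm : 1 ≤ m) (hd1 : 1 ≤ d) (hd2 : d ≤ q ^ m)
    (hs : s ≤ m * (q - 1)) (c : ℤ) (hc : c = ⌈Real.logb q d⌉) :
    d ≤ minDist (monomialCode F m (RMset q m (s : ℤ))) ↔
      (s : ℤ) ≤ ((m : ℤ) - c) * ((q : ℤ) - 1) + (q : ℤ) - ⌈(d : ℝ) / (q : ℝ) ^ (c - 1)⌉ :=
  statement7_general F q m d s hq hs c hc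
end
end

section
/- Let A ⊆ B ⊆ {0,…,q-1}^m with A and B nonempty, and let Q be the set of polynomials f ∈ F_q[X_1,…,X_m] whose support is contained in B \ A. Let t_{C_B} = ⌊(δ(C_B)-1)/2⌋. If y ∈ F_q^n satisfies d_H(y, C_B) ≤ t_{C_B}, then there exists a unique polynomial f ∈ Q such that d_H(y - ev(f), C_A) ≤ t_{C_B}. -/
open MvPolynomial Finset Pointwise

noncomputable section

/-!
Split a codeword `ev(g)` of `C_B` within `t` of `y` along `B ⊆ A ∪ (B \ A)`: its part outside `A`
gives the existence. For uniqueness, each candidate `f` yields a codeword `ev(h + f)` of `C_B`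
(with `h` supported in `A`) within `t` of `y`; by unique decoding all these codewords coincide,
evaluation is injective on polynomials of partial degrees `< q`, and so the parts outside `A`
are equal.
-/

section HammingCodes

variable {F : Type} [Field F] [Fintype F] [DecidableEq F] {m : ℕ}

lemma minDist_le_hammingNorm {C : Set ((Fin m → F) → F)} {v : (Fin m → F) → F}
    (hv : v ∈ C) (hv0 : v ≠ 0) : minDist C ≤ hammingNorm v :=
  Nat.sInf_le ⟨v, hv, hv0, rfl⟩

lemma distToCode_le_hammingDist {C : Set ((Fin m → F) → F)} {y c : (Fin m → F) → F}
    (hc : c ∈ C) : distToCode y C ≤ hammingDist y c :=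
  Nat.sInf_le ⟨c, hc, rfl⟩

lemma exists_hammingDist_le_of_distToCode_le {C : Set ((Fin m → F) → F)}
    (hC : C.Nonempty) {y : (Fin m → F) → F} {t : ℕ} (h : distToCode y C ≤ t) :
    ∃ c ∈ C, hammingDist y c ≤ t := by
  obtain ⟨c, hc, hyc⟩ := Nat.sInf_mem (s := {w | ∃ c ∈ C, hammingDist y c = w})
    (hC.image (hammingDist y))
  exact ⟨c, hc, hyc.trans_le h⟩

lemma hammingDist_sub_left_eq_hammingDist_add {ι β : Type*} [Fintype ι] [AddCommGroup β]
    [DecidableEq β] (y a b : ι → β) : hammingDist (y - a) b = hammingDist y (a + b) := by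
  rw [hammingDist_eq_hammingNorm, hammingDist_eq_hammingNorm]
  congr 1
  abel

theorem eq_of_hammingDist_le_half_minDist {C : Set ((Fin m → F) → F)}
    (hC : ∀ u ∈ C, ∀ v ∈ C, u - v ∈ C) {y u v : (Fin m → F) → F} (hu : u ∈ C) (hv : v ∈ C)
    (hyu : hammingDist y u ≤ (minDist C - 1) / 2)
    (hyv : hammingDist y v ≤ (minDist C - 1) / 2) : u = v := by
  by_contra huv
  have hδ : minDist C ≤ hammingDist u v := by
    rw [hammingDist_eq_hammingNorm, neg_add_eq_sub]
    exact minDist_le_hammingNorm (hC v hv u hu) (sub_ne_zero.mpr (Ne.symm huv))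
  have hpos : 0 < hammingDist u v := hammingDist_pos.mpr huv
  have htri := hammingDist_triangle u y v
  rw [hammingDist_comm u y] at htri
  omega

end HammingCodes

section Evaluation

variable {F : Type} [Field F] {m : ℕ}

lemma evalPt_add (f g : MvPolynomial (Fin m) F) : evalPt (f + g) = evalPt f + evalPt g := by
  funext P
  simp [evalPt]

lemma evalPt_sub (f g : MvPolynomial (Fin m) F) : evalPt (f - g) = evalPt f - evalPt g := by
  funext P
  simp [evalPt]

lemma sub_mem_monomialCode {A : Set (Fin m →₀ ℕ)} {u v : (Fin m → F) → F}
    (hu : u ∈ monomialCode F m A) (hv : v ∈ monomialCode F m A) :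
    u - v ∈ monomialCode F m A := by
  obtain ⟨f, hf, rfl⟩ := hu
  obtain ⟨g, hg, rfl⟩ := hv
  exact ⟨f - g, (restrictSupport F A).sub_mem hf hg, (evalPt_sub f g).symm⟩

lemma monomialCode_nonempty (A : Set (Fin m →₀ ℕ)) : (monomialCode F m A).Nonempty :=
  ⟨_, 0, (restrictSupport F A).zero_mem, rfl⟩

lemma evalPt_injOn [Fintype F] :
    Set.InjOn evalPt (restrictSupport F {i : Fin m →₀ ℕ | ∀ j, i j < Fintype.card F} :
      Set (MvPolynomial (Fin m) F)) := by
  intro f hf g hg hfg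
  rw [← sub_eq_zero]
  refine eq_zero_of_eval_eq_zero (Fin m) F _
    (fun P => by simpa [evalPt, sub_eq_zero] using congrFun hfg P) fun i hi j => ?_
  have := Submodule.sub_mem _ hf hg hi j
  omega

end Evaluation

section RestrictSupport

variable {R σ : Type*} [CommSemiring R]

lemma restrictSupport_union (s t : Set (σ →₀ ℕ)) :
    restrictSupport R (s ∪ t) = restrictSupport R s ⊔ restrictSupport R t := by
  simp only [restrictSupport_eq_span, Set.image_union, Submodule.span_union]

lemma disjoint_restrictSupport {s t : Set (σ →₀ ℕ)} (hst : Disjoint s t) :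
    Disjoint (restrictSupport R s) (restrictSupport R t) := by
  rw [Submodule.disjoint_def]
  intro p hs ht
  rw [← support_eq_empty, ← Finset.coe_eq_empty, ← Set.subset_empty_iff]
  exact (Set.subset_inter hs ht).trans hst.inter_eq.subset

lemma exists_add_eq_of_mem_restrictSupport {s : Set (σ →₀ ℕ)} {p : MvPolynomial σ R}
    (hp : p ∈ restrictSupport R s) (t : Set (σ →₀ ℕ)) :
    ∃ q ∈ restrictSupport R t, ∃ r ∈ restrictSupport R (s \ t), q + r = p := by
  have : p ∈ restrictSupport R (t ∪ s \ t) :=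
    restrictSupport_mono R (Set.subset_union_right.trans Set.union_sdiff_self.superset) hp
  rwa [restrictSupport_union, Submodule.mem_sup] at this

end RestrictSupport

lemma Submodule.eq_of_add_eq_add_of_disjoint {R M : Type*} [Ring R] [AddCommGroup M]
    [Module R M] {p p' : Submodule R M} (h : Disjoint p p') {x y x' y' : M} (hx : x ∈ p)
    (hy : y ∈ p) (hx' : x' ∈ p') (hy' : y' ∈ p') (hxy : x + x' = y + y') : x' = y' := by
  rw [← sub_eq_zero]
  refine Submodule.disjoint_def.mp h _ ?_ (p'.sub_mem hx' hy')
  rw [show x' - y' = y - x by rw [sub_eq_sub_iff_add_eq_add, add_comm, hxy]]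
  exact p.sub_mem hy hx

theorem statement9_general (F : Type) [Field F] [Fintype F] [DecidableEq F]
    (q m : ℕ) (hq : Fintype.card F = q)
    (A B : Set (Fin m →₀ ℕ)) (hAB : A ⊆ B) (hB : B ⊆ {i | ∀ j, i j < q})
    (t : ℕ) (ht : t = (minDist (monomialCode F m B) - 1) / 2)
    (y : (Fin m → F) → F) (hy : distToCode y (monomialCode F m B) ≤ t) :
    ∃! f : MvPolynomial (Fin m) F,
      (↑f.support : Set (Fin m →₀ ℕ)) ⊆ B \ A ∧
        distToCode (y - evalPt f) (monomialCode F m A) ≤ t := by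
  subst hq ht
  obtain ⟨_, ⟨g, hgB, rfl⟩, hyg⟩ := exists_hammingDist_le_of_distToCode_le
    (monomialCode_nonempty B) hy
  obtain ⟨h, hhA, f, hf, rfl⟩ := exists_add_eq_of_mem_restrictSupport (R := F) hgB A
  refine ⟨f, ⟨hf, ?_⟩, ?_⟩
  · refine (distToCode_le_hammingDist (C := monomialCode F m A) ⟨h, hhA, rfl⟩).trans ?_
    rwa [hammingDist_sub_left_eq_hammingDist_add, add_comm, ← evalPt_add]
  rintro f' ⟨hf', hd'⟩
  obtain ⟨_, ⟨h', hh'A, rfl⟩, hyh'⟩ := exists_hammingDist_le_of_distToCode_le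
    (monomialCode_nonempty A) hd'
  have hh'B : h' + f' ∈ restrictSupport F B :=
    add_mem (restrictSupport_mono F hAB hh'A) (restrictSupport_mono F Set.sdiff_subset hf')
  have hcode : evalPt (h' + f') = evalPt (h + f) := by
    refine eq_of_hammingDist_le_half_minDist (fun _ hu _ hv => sub_mem_monomialCode hu hv)
      ⟨_, hh'B, rfl⟩ ⟨_, hgB, rfl⟩ ?_ hyg
    rwa [evalPt_add, add_comm, ← hammingDist_sub_left_eq_hammingDist_add]
  have hpoly : h' + f' = h + f :=
    evalPt_injOn (restrictSupport_mono F hB hh'B) (restrictSupport_mono F hB hgB) hcode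
  exact Submodule.eq_of_add_eq_add_of_disjoint (disjoint_restrictSupport Set.disjoint_sdiff_right)
    hh'A hhA hf' hf hpoly

/-- for `A ⊆ B ⊆ {0,…,q-1}^m` nonempty and `t = ⌊(δ(C_B)-1)/2⌋`, any word
within distance `t` of `C_B` equals `ev(f)` plus a word within distance `t` of `C_A`,
for a unique polynomial `f` with support in `B \ A`. -/
theorem statement9 (F : Type) [Field F] [Fintype F] [DecidableEq F]
    (q m : ℕ) (hq : Fintype.card F = q)
    (A B : Set (Fin m →₀ ℕ)) (hAB : A ⊆ B) (hB : B ⊆ {i | ∀ j, i j < q})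
    (hA : A.Nonempty) (hBne : B.Nonempty)
    (t : ℕ) (ht : t = (minDist (monomialCode F m B) - 1) / 2)
    (y : (Fin m → F) → F) (hy : distToCode y (monomialCode F m B) ≤ t) :
    ∃! f : MvPolynomial (Fin m) F,
      (↑f.support : Set (Fin m →₀ ℕ)) ⊆ B \ A ∧
        distToCode (y - evalPt f) (monomialCode F m A) ≤ t :=
  statement9_general F q m hq A B hAB hB t ht y hy
end
end
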